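/- Let ‖·‖ be a URTC-norm on ℝ², let d > 0, and let b₁, b₂ ∈ ℝ² satisfy ‖b₁‖ = ‖b₂‖ = ‖b₁ − b₂‖ = d. Then there exist points c₁, c₂, c₃ ∈ ℝ² such that (0, b₁, b₂, b₁ + b₂, c₁, c₂, c₃) is a d-probe. -/

import Mathlib

/-!
For a URTC-norm `N`, every point `u` with `N u = d` is the base of exactly two `N`-equilateral
triangles `(0, u, x)`, namely with apexes `x` and `u - x`, and these lie on opposite sides of the
line `ℝ u`. Fixing the side by the sign of the cross product gives a compact set `T` of
oriented triangles `(u, x)` that projects bijectively, hence homeomorphically, onto the connected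
`N`-sphere of radius `d`; so `T` is connected. On `T` the function
`(c₁, c₂) ↦ N (b₁ + b₂ - (c₁ + c₂))` is `0` at `(b₁, b₂)` and at least `d` at `(-b₁, -b₂)`, so by
the intermediate value theorem it takes the value `d`, and `c₃ = c₁ + c₂` completes the probe.
-/

/-- `N` is a norm on `ℝ²`. -/
structure IsNorm (N : ℝ × ℝ → ℝ) : Prop where
  add_le : ∀ x y : ℝ × ℝ, N (x + y) ≤ N x + N y
  smul_eq : ∀ (c : ℝ) (x : ℝ × ℝ), N (c • x) = |c| * N x
  eq_zero_of : ∀ x : ℝ × ℝ, N x = 0 → x = 0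

/-- `N` is a URTC-norm: for every `a b` at `N`-distance `1`, there are exactly two
points `x` with `N (a - x) = 1` and `N (b - x) = 1`. -/
def IsURTC (N : ℝ × ℝ → ℝ) : Prop :=
  ∀ a b : ℝ × ℝ, N (a - b) = 1 →
    {x : ℝ × ℝ | N (a - x) = 1 ∧ N (b - x) = 1}.encard = 2

/-- A `d`-probe: a 7-tuple of points with the eleven prescribed pairwise distances
all equal to `d`. -/
def IsProbe (N : ℝ × ℝ → ℝ) (d : ℝ) (a b₁ b₂ b₃ c₁ c₂ c₃ : ℝ × ℝ) : Prop :=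
  N (a - b₁) = d ∧ N (a - b₂) = d ∧ N (b₁ - b₂) = d ∧ N (b₁ - b₃) = d ∧
  N (b₂ - b₃) = d ∧ N (a - c₁) = d ∧ N (a - c₂) = d ∧ N (c₁ - c₂) = d ∧
  N (c₁ - c₃) = d ∧ N (c₂ - c₃) = d ∧ N (b₃ - c₃) = d

open Set

theorem IsCompact.isConnected_of_bijOn {X Y : Type*} [TopologicalSpace X] [TopologicalSpace Y]
    [T2Space Y] {T : Set X} {S : Set Y} {f : X → Y} (hT : IsCompact T) (hf : ContinuousOn f T)
    (hTS : BijOn f T S) (hS : IsConnected S) : IsConnected T := by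
  have : CompactSpace T := isCompact_iff_compactSpace.mp hT
  have hrange : S ⊆ range (T.domRestrict f) := by
    rintro y hy
    obtain ⟨x, hx, rfl⟩ := hTS.surjOn hy
    exact ⟨⟨x, hx⟩, rfl⟩
  have hpre : T.domRestrict f ⁻¹' S = univ := eq_univ_of_forall fun x ↦ hTS.mapsTo x.2
  have := hS.preimage_of_isClosedMap hTS.injOn.injective hf.domRestrict.isClosedMap hrange
  rw [hpre, ← connectedSpace_iff_univ] at this
  exact isConnected_iff_connectedSpace.mpr this

namespace IsNorm

variable {N : ℝ × ℝ → ℝ}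

protected lemma map_zero (hN : IsNorm N) : N 0 = 0 := by
  simpa using hN.smul_eq 0 0

lemma map_neg (hN : IsNorm N) (x : ℝ × ℝ) : N (-x) = N x := by
  simpa using hN.smul_eq (-1) x

lemma nonneg (hN : IsNorm N) (x : ℝ × ℝ) : 0 ≤ N x := by
  have h := hN.add_le x (-x)
  rw [add_neg_cancel, hN.map_zero, hN.map_neg] at h
  linarith

lemma map_smul_of_pos (hN : IsNorm N) {c : ℝ} (hc : 0 < c) (x : ℝ × ℝ) : N (c • x) = c * N x := by
  rw [hN.smul_eq, abs_of_pos hc]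

def toSeminorm (hN : IsNorm N) : Seminorm ℝ (ℝ × ℝ) :=
  Seminorm.of N hN.add_le fun c x ↦ by rw [hN.smul_eq, Real.norm_eq_abs]

protected lemma continuous (hN : IsNorm N) : Continuous N :=
  continuousOn_univ.mp (hN.toSeminorm.convexOn.continuousOn isOpen_univ)

lemma exists_pos_mul_norm_le (hN : IsNorm N) : ∃ c > 0, ∀ x : ℝ × ℝ, c * ‖x‖ ≤ N x := by
  obtain ⟨z, hz, hmin⟩ := (isCompact_sphere (0 : ℝ × ℝ) 1).exists_isMinOn
    (NormedSpace.sphere_nonempty.mpr zero_le_one) hN.continuous.continuousOn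
  have hz0 : z ≠ 0 := ne_zero_of_mem_unit_sphere ⟨z, hz⟩
  refine ⟨N z, (hN.nonneg z).lt_of_ne fun h ↦ hz0 (hN.eq_zero_of z h.symm), fun x ↦ ?_⟩
  rcases eq_or_ne x 0 with rfl | hx
  · simp [hN.map_zero]
  have hxpos : 0 < ‖x‖ := norm_pos_iff.mpr hx
  have hmin_x := isMinOn_iff.mp hmin (‖x‖⁻¹ • x) (by simp [norm_smul, hxpos.ne'])
  rw [hN.map_smul_of_pos (inv_pos.mpr hxpos)] at hmin_x
  rwa [← le_div_iff₀ hxpos, div_eq_inv_mul]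

lemma isBounded_setOf_le (hN : IsNorm N) (r : ℝ) : Bornology.IsBounded {x | N x ≤ r} := by
  obtain ⟨c, hc, hle⟩ := hN.exists_pos_mul_norm_le
  refine (Metric.isBounded_iff_subset_closedBall 0).mpr ⟨r / c, fun x hx ↦ ?_⟩
  rw [Metric.mem_closedBall, dist_zero_right, le_div_iff₀' hc]
  exact (hle x).trans hx

lemma isConnected_setOf_eq (hN : IsNorm N) {d : ℝ} (hd : 0 < d) : IsConnected {x | N x = d} := by
  have hrank : 1 < Module.rank ℝ (ℝ × ℝ) := by
    rw [rank_prod, Module.rank_self, Cardinal.lift_one, one_add_one_eq_two]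
    exact Cardinal.one_lt_two
  have hN0 : ∀ x ∈ ({0}ᶜ : Set (ℝ × ℝ)), N x ≠ 0 := fun x hx h ↦ hx (hN.eq_zero_of x h)
  have himage : (fun x ↦ (d / N x) • x) '' {0}ᶜ = {x | N x = d} := by
    ext y
    constructor
    · rintro ⟨x, hx, rfl⟩
      have hNx := (hN.nonneg x).lt_of_ne (hN0 x hx).symm
      exact (hN.map_smul_of_pos (div_pos hd hNx) x).trans (div_mul_cancel₀ _ hNx.ne')
    · intro hy
      have hy0 : y ≠ 0 := by rintro rfl; exact hd.ne' (hy ▸ hN.map_zero)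
      refine ⟨y, hy0, ?_⟩
      change (d / N y) • y = y
      rw [show N y = d from hy, div_self hd.ne', one_smul]
  rw [← himage]
  refine (isConnected_compl_singleton_of_one_lt_rank hrank 0).image _ ?_
  exact (continuousOn_const.div hN.continuous.continuousOn hN0).smul continuousOn_id

lemma le_map_add (hN : IsNorm N) {d : ℝ} {x y : ℝ × ℝ} (hx : N x = d) (hxy : N (x - y) = d) :
    d ≤ N (x + y) := by
  have h := hN.add_le (x + y) (x - y)
  rw [add_add_sub_cancel, ← two_smul ℝ, hN.map_smul_of_pos two_pos, hx, hxy] at h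
  linarith

end IsNorm

def cross (u x : ℝ × ℝ) : ℝ := u.1 * x.2 - u.2 * x.1

lemma cross_sub_right (u x : ℝ × ℝ) : cross u (u - x) = -cross u x := by
  simp only [cross, Prod.fst_sub, Prod.snd_sub]; ring

lemma cross_neg_neg (u x : ℝ × ℝ) : cross (-u) (-x) = cross u x := by
  simp only [cross, Prod.fst_neg, Prod.snd_neg]; ring

lemma continuous_cross : Continuous fun p : (ℝ × ℝ) × (ℝ × ℝ) ↦ cross p.1 p.2 := by
  unfold cross; fun_prop

lemma exists_eq_smul_of_cross_eq_zero {u x : ℝ × ℝ} (hu : u ≠ 0) (h : cross u x = 0) :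
    ∃ l : ℝ, x = l • u := by
  rw [cross, sub_eq_zero] at h
  rcases ne_or_eq u.1 0 with h1 | h1
  · refine ⟨x.1 / u.1, Prod.ext ?_ ?_⟩
    · simp [h1]
    · simp only [Prod.smul_snd, smul_eq_mul]; field_simp; linarith
  · have h2 : u.2 ≠ 0 := fun h2 ↦ hu (Prod.ext h1 h2)
    refine ⟨x.2 / u.2, Prod.ext ?_ ?_⟩
    · simp only [Prod.smul_fst, smul_eq_mul]; field_simp; rw [h1] at h ⊢; linarith
    · simp [h2]

def apexes (N : ℝ × ℝ → ℝ) (d : ℝ) (u : ℝ × ℝ) : Set (ℝ × ℝ) := {x | N x = d ∧ N (u - x) = d}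

namespace IsNorm

variable {N : ℝ × ℝ → ℝ} {d : ℝ}

lemma cross_ne_zero (hN : IsNorm N) (hd : 0 < d) {u x : ℝ × ℝ} (hu : N u = d)
    (hx : x ∈ apexes N d u) : cross u x ≠ 0 := by
  intro h
  have hu0 : u ≠ 0 := by rintro rfl; exact hd.ne' (hu ▸ hN.map_zero)
  obtain ⟨l, rfl⟩ := exists_eq_smul_of_cross_eq_zero hu0 h
  obtain ⟨hx, hux⟩ := hx
  rw [hN.smul_eq, hu] at hx
  have hl : |l| = 1 := by nlinarith
  rcases abs_eq zero_le_one |>.mp hl with rfl | rfl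
  · rw [one_smul, sub_self, hN.map_zero] at hux
    exact hd.ne hux
  · rw [neg_one_smul, sub_neg_eq_add, ← two_smul ℝ, hN.map_smul_of_pos two_pos, hu] at hux
    linarith

end IsNorm

lemma sub_mem_apexes {N : ℝ × ℝ → ℝ} {d : ℝ} {u x : ℝ × ℝ} (hx : x ∈ apexes N d u) :
    u - x ∈ apexes N d u :=
  ⟨hx.2, by rw [sub_sub_cancel]; exact hx.1⟩

def orientedTriangles (N : ℝ × ℝ → ℝ) (d s : ℝ) : Set ((ℝ × ℝ) × (ℝ × ℝ)) :=
  {p | N p.1 = d ∧ p.2 ∈ apexes N d p.1 ∧ 0 < s * cross p.1 p.2}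

namespace IsNorm

variable {N : ℝ × ℝ → ℝ} {d s : ℝ}

lemma neg_mem_orientedTriangles (hN : IsNorm N) {p : (ℝ × ℝ) × (ℝ × ℝ)}
    (hp : p ∈ orientedTriangles N d s) : -p ∈ orientedTriangles N d s := by
  obtain ⟨h1, ⟨h2, h12⟩, hs⟩ := hp
  refine ⟨?_, ⟨?_, ?_⟩, ?_⟩
  · rw [Prod.fst_neg, hN.map_neg, h1]
  · rw [Prod.snd_neg, hN.map_neg, h2]
  · rw [Prod.fst_neg, Prod.snd_neg, ← neg_sub', hN.map_neg, h12]
  · rwa [Prod.fst_neg, Prod.snd_neg, cross_neg_neg]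

lemma isCompact_orientedTriangles (hN : IsNorm N) (hd : 0 < d) (hs : s ≠ 0) :
    IsCompact (orientedTriangles N d s) := by
  -- the strict sign condition is closed, since `cross` does not vanish on equilateral triangles
  have heq : orientedTriangles N d s =
      {p | N p.1 = d ∧ N p.2 = d ∧ N (p.1 - p.2) = d ∧ 0 ≤ s * cross p.1 p.2} := by
    ext p
    refine ⟨fun ⟨h1, h2, h3⟩ ↦ ⟨h1, h2.1, h2.2, h3.le⟩, fun ⟨h1, h2, h12, h3⟩ ↦ ⟨h1, ⟨h2, h12⟩, ?_⟩⟩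
    exact h3.lt_of_ne (mul_ne_zero hs (hN.cross_ne_zero hd h1 ⟨h2, h12⟩)).symm
  have hclosed : IsClosed (orientedTriangles N d s) := by
    rw [heq]
    exact (isClosed_eq (hN.continuous.comp continuous_fst) continuous_const).inter <|
      (isClosed_eq (hN.continuous.comp continuous_snd) continuous_const).inter <|
      (isClosed_eq (hN.continuous.comp (continuous_fst.sub continuous_snd)) continuous_const).inter
      (isClosed_le continuous_const (continuous_const.mul continuous_cross))
  refine Metric.isCompact_of_isClosed_isBounded hclosed
    (((hN.isBounded_setOf_le d).prod (hN.isBounded_setOf_le d)).subset ?_)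
  rintro p ⟨h1, ⟨h2, -⟩, -⟩
  exact ⟨h1.le, h2.le⟩

end IsNorm

namespace IsURTC

variable {N : ℝ × ℝ → ℝ} {d s : ℝ}

lemma encard_eq_two (hU : IsURTC N) (hN : IsNorm N) (hd : 0 < d)
    {a b : ℝ × ℝ} (hab : N (a - b) = d) :
    {x | N (a - x) = d ∧ N (b - x) = d}.encard = 2 := by
  have hscale : ∀ v w : ℝ × ℝ, N (d⁻¹ • v - d⁻¹ • w) = 1 ↔ N (v - w) = d := fun v w ↦ by
    rw [← smul_sub, hN.map_smul_of_pos (inv_pos.mpr hd), inv_mul_eq_one₀ hd.ne', eq_comm]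
  have himage : {x | N (a - x) = d ∧ N (b - x) = d} =
      (d • ·) '' {y | N (d⁻¹ • a - y) = 1 ∧ N (d⁻¹ • b - y) = 1} := by
    ext x
    constructor
    · rintro ⟨ha, hb⟩
      exact ⟨d⁻¹ • x, ⟨(hscale a x).mpr ha, (hscale b x).mpr hb⟩, smul_inv_smul₀ hd.ne' x⟩
    · rintro ⟨y, ⟨ha, hb⟩, rfl⟩
      rw [← inv_smul_smul₀ hd.ne' y] at ha hb
      exact ⟨(hscale _ _).mp ha, (hscale _ _).mp hb⟩
  rw [himage, (smul_right_injective (ℝ × ℝ) hd.ne').encard_image]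
  exact hU _ _ ((hscale a b).mpr hab)

lemma encard_apexes (hU : IsURTC N) (hN : IsNorm N) (hd : 0 < d) {u : ℝ × ℝ}
    (hu : N u = d) : (apexes N d u).encard = 2 := by
  convert hU.encard_eq_two hN hd (b := 0) (by rwa [sub_zero]) using 2
  ext x
  rw [apexes, mem_ofPred_eq, mem_ofPred_eq, zero_sub, hN.map_neg, and_comm]

lemma apexes_eq_pair (hU : IsURTC N) (hN : IsNorm N) (hd : 0 < d) {u x : ℝ × ℝ}
    (hu : N u = d) (hx : x ∈ apexes N d u) : apexes N d u = {x, u - x} := by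
  have hne : x ≠ u - x := fun h ↦ hN.cross_ne_zero hd hu hx (by
    have := cross_sub_right u x; rw [← h] at this; linarith)
  refine ((toFinite _).eq_of_subset_of_encard_le ?_ ?_).symm
  · exact insert_subset hx (singleton_subset_iff.mpr (sub_mem_apexes hx))
  · rw [encard_pair hne, hU.encard_apexes hN hd hu]

lemma existsUnique_mem_orientedTriangles (hU : IsURTC N) (hN : IsNorm N) (hd : 0 < d)
    (hs : s ≠ 0) {u : ℝ × ℝ} (hu : N u = d) : ∃! x, (u, x) ∈ orientedTriangles N d s := by
  obtain ⟨x, hx⟩ : (apexes N d u).Nonempty := by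
    rw [← encard_pos, hU.encard_apexes hN hd hu]; norm_num
  have hpair := hU.apexes_eq_pair hN hd hu hx
  have hux := mul_ne_zero hs (hN.cross_ne_zero hd hu hx)
  have hmem : ∀ y, (u, y) ∈ orientedTriangles N d s ↔ y ∈ apexes N d u ∧ 0 < s * cross u y :=
    fun y ↦ and_iff_right hu
  simp only [hmem, hpair, mem_insert_iff, mem_singleton_iff]
  rcases hux.lt_or_gt with hneg | hpos
  · refine ⟨u - x, ⟨Or.inr rfl, ?_⟩, ?_⟩
    · rw [cross_sub_right]; linarith
    · rintro y ⟨rfl | rfl, hy⟩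
      · linarith
      · rfl
  · refine ⟨x, ⟨Or.inl rfl, hpos⟩, ?_⟩
    rintro y ⟨rfl | rfl, hy⟩
    · rfl
    · rw [cross_sub_right] at hy; linarith

lemma isConnected_orientedTriangles (hU : IsURTC N) (hN : IsNorm N) (hd : 0 < d) (hs : s ≠ 0) :
    IsConnected (orientedTriangles N d s) := by
  refine (hN.isCompact_orientedTriangles hd hs).isConnected_of_bijOn continuous_fst.continuousOn
    ⟨fun p hp ↦ hp.1, ?_, ?_⟩ (hN.isConnected_setOf_eq hd)
  · rintro ⟨u, x⟩ hx ⟨v, y⟩ hy (rfl : u = v)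
    rw [(hU.existsUnique_mem_orientedTriangles hN hd hs hx.1).unique hx hy]
  · intro u hu
    obtain ⟨x, hx, -⟩ := hU.existsUnique_mem_orientedTriangles hN hd hs hu
    exact ⟨(u, x), hx, rfl⟩

end IsURTC

lemma isProbe_of_orientedTriangles {N : ℝ × ℝ → ℝ} (hN : IsNorm N) {d s : ℝ}
    {b c : (ℝ × ℝ) × (ℝ × ℝ)} (hb : b ∈ orientedTriangles N d s)
    (hc : c ∈ orientedTriangles N d s) (hbc : N (b.1 + b.2 - (c.1 + c.2)) = d) :
    IsProbe N d 0 b.1 b.2 (b.1 + b.2) c.1 c.2 (c.1 + c.2) := by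
  obtain ⟨hb1, ⟨hb2, hb12⟩, -⟩ := hb
  obtain ⟨hc1, ⟨hc2, hc12⟩, -⟩ := hc
  simp only [IsProbe, zero_sub, hN.map_neg, sub_add_cancel_left, sub_add_cancel_right]
  exact ⟨hb1, hb2, hb12, hb2, hb1, hc1, hc2, hc12, hc2, hc1, hbc⟩

/-- For a URTC-norm, any triple `(0, b₁, b₂)` in regular `d`-position extends to a
`d`-probe `(0, b₁, b₂, b₁ + b₂, c₁, c₂, c₃)`. -/
theorem exists_probe (N : ℝ × ℝ → ℝ) (hN : IsNorm N) (hU : IsURTC N)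
    (d : ℝ) (hd : 0 < d) (b₁ b₂ : ℝ × ℝ)
    (h1 : N b₁ = d) (h2 : N b₂ = d) (h12 : N (b₁ - b₂) = d) :
    ∃ c₁ c₂ c₃ : ℝ × ℝ, IsProbe N d 0 b₁ b₂ (b₁ + b₂) c₁ c₂ c₃ := by
  have hs : cross b₁ b₂ ≠ 0 := hN.cross_ne_zero hd h1 ⟨h2, h12⟩
  have hb : (b₁, b₂) ∈ orientedTriangles N d (cross b₁ b₂) := ⟨h1, ⟨h2, h12⟩, mul_self_pos.mpr hs⟩
  have hlow : N (b₁ + b₂ - (b₁ + b₂)) ≤ d := by rw [sub_self, hN.map_zero]; exact hd.le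
  have hhigh : d ≤ N (b₁ + b₂ - (-b₁ + -b₂)) := by
    rw [← neg_add, sub_neg_eq_add, ← two_smul ℝ, hN.map_smul_of_pos two_pos]
    linarith [hN.le_map_add h1 h12]
  obtain ⟨c, hc, hbc⟩ :=
    (hU.isConnected_orientedTriangles hN hd hs).isPreconnected.intermediate_value hb
      (hN.neg_mem_orientedTriangles hb)
      (hN.continuous.comp (continuous_const.sub (continuous_fst.add continuous_snd))).continuousOn
      ⟨hlow, hhigh⟩
  exact ⟨c.1, c.2, c.1 + c.2, isProbe_of_orientedTriangles hN hb hc hbc⟩
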